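/- arXiv:2005.14340 — 2 statements merged into one kernel-verified Lean document; each statement's English description precedes it below -/
import Mathlib

section
/- For odd N = 2Q+1, if a vector v ∈ ℂ^N satisfies, for all j, the relation ∑_{m=1}^{N} v_m · S'((j−m)h) = 0, where S(x) = sin((Q+1/2)·2πx/a)/(N·sin(πx/a)), h = a/N, then v is a constant vector, i.e. v_ℓ = C for all ℓ and some constant C. -/
/-!
Write `ζ = exp(2πi/N)`. Away from the zeros of `sin(θ/2)` the Dirichlet kernel equals the
trigonometric polynomial `(∑_{|n| ≤ Q} cos nθ)/N`, and at those zeros its derivative is `0` (the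
kernel is discontinuous there), which is also the derivative of the polynomial. Hence the matrix
entries are `S'(rh) = (2πi/(aN)) ∑_{|n| ≤ Q} n ζ^{nr}`: the matrix is circulant with symbol
`n ↦ n` on the frequencies `-Q, …, Q`. Taking discrete Fourier coefficients, the kernel equation
becomes `k · v̂(k) = 0`, so only `v̂(0)` survives, and Fourier inversion makes `v` constant.
-/

open Real Finset Filter Topology

namespace Int

variable {N : ℕ} {c d : ℤ}

theorem Icc_eq_image_range (hcd : d + 1 = c + N) :
    Icc c d = (Finset.range N).image (fun i : ℕ => c + i) := by
  ext j
  simp only [mem_Icc, mem_image, mem_range]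
  constructor
  · exact fun hj => ⟨(j - c).toNat, by omega, by omega⟩
  · rintro ⟨i, hi, rfl⟩
    omega

theorem dvd_sub_iff_eq_of_mem_Icc (hcd : d + 1 = c + N) {m n : ℤ} (hm : m ∈ Icc c d)
    (hn : n ∈ Icc c d) : (N : ℤ) ∣ m - n ↔ m = n := by
  rw [mem_Icc] at hm hn
  refine ⟨fun h => sub_eq_zero.mp (eq_zero_of_abs_lt_dvd h ?_), fun h => by simp [h]⟩
  rw [abs_lt]
  omega

theorem sum_mul_ite_dvd_sub_Icc {M : Type*} [Semiring M] (hcd : d + 1 = c + N) {m : ℤ}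
    (hm : m ∈ Icc c d) (f : ℤ → M) :
    ∑ n ∈ Icc c d, f n * (if (N : ℤ) ∣ m - n then (N : M) else 0) = f m * N := by
  refine (sum_eq_single m (fun n hn hnm => ?_) (absurd hm)).trans (by simp)
  rw [if_neg (mt (dvd_sub_iff_eq_of_mem_Icc hcd hm hn).mp (Ne.symm hnm)), mul_zero]

end Int

section DiscreteFourier

variable {K : Type*} [Field K] {ζ : K} {N : ℕ} {c d c' d' : ℤ}

theorem IsPrimitiveRoot.sum_zpow_mul_Icc (hζ : IsPrimitiveRoot ζ N) (hcd : d + 1 = c + N)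
    (k : ℤ) : ∑ j ∈ Icc c d, ζ ^ (k * j) = if (N : ℤ) ∣ k then (N : K) else 0 := by
  rcases Nat.eq_zero_or_pos N with rfl | hN
  · simp [show Icc c d = ∅ from Icc_eq_empty (by omega)]
  have hζ0 : ζ ≠ 0 := hζ.ne_zero hN.ne'
  split_ifs with hk
  · rw [sum_congr rfl fun j _ => (hζ.zpow_eq_one_iff_dvd _).mpr (hk.mul_right j), sum_const,
      Int.card_Icc, nsmul_one, show (d + 1 - c).toNat = N by omega]
  · have hζk : ζ ^ k ≠ 1 := by rwa [Ne, hζ.zpow_eq_one_iff_dvd]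
    have hζkN : (ζ ^ k) ^ N = 1 := by
      rw [← zpow_natCast, ← zpow_mul, mul_comm, zpow_mul, hζ.zpow_eq_one, one_zpow]
    have hgeom : ∑ i ∈ range N, (ζ ^ k) ^ i = 0 := by
      rw [geom_sum_eq hζk, hζkN, sub_self, zero_div]
    rw [Int.Icc_eq_image_range hcd, sum_image (fun i _ j _ h => by simpa using h)]
    simp only [zpow_mul, zpow_add₀ (zpow_ne_zero k hζ0), zpow_natCast, ← mul_sum]
    rw [hgeom, mul_zero]

def dftOn (ζ : K) (A : Finset ℤ) (v : ℤ → K) (k : ℤ) : K := ∑ m ∈ A, v m * ζ ^ (-(k * m))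

theorem IsPrimitiveRoot.sum_zpow_mul_dftOn (hζ : IsPrimitiveRoot ζ N) (hcd : d + 1 = c + N)
    (hcd' : d' + 1 = c' + N) (v : ℤ → K) {m : ℤ} (hm : m ∈ Icc c d) :
    ∑ k ∈ Icc c' d', ζ ^ (k * m) * dftOn ζ (Icc c d) v k = v m * N := by
  have hζ0 : ζ ≠ 0 := hζ.ne_zero (by rw [mem_Icc] at hm; omega)
  calc ∑ k ∈ Icc c' d', ζ ^ (k * m) * dftOn ζ (Icc c d) v k
      = ∑ n ∈ Icc c d, v n * ∑ k ∈ Icc c' d', ζ ^ ((m - n) * k) := by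
        simp only [dftOn, mul_sum]
        rw [sum_comm]
        refine sum_congr rfl fun n _ => sum_congr rfl fun k _ => ?_
        rw [show (m - n) * k = k * m + -(k * n) by ring, zpow_add₀ hζ0]
        ring
    _ = v m * N := by
        simp only [hζ.sum_zpow_mul_Icc hcd']
        exact Int.sum_mul_ite_dvd_sub_Icc hcd hm v

theorem IsPrimitiveRoot.mul_dftOn_eq_zero_of_convolution_eq_zero (hζ : IsPrimitiveRoot ζ N)
    (hcd : d + 1 = c + N) (hcd' : d' + 1 = c' + N) {v w : ℤ → K}
    (hconv : ∀ j, ∑ m ∈ Icc c d, v m * ∑ n ∈ Icc c' d', w n * ζ ^ (n * (j - m)) = 0)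
    {k : ℤ} (hk : k ∈ Icc c' d') : w k * dftOn ζ (Icc c d) v k = 0 := by
  have hN : NeZero N := ⟨by rw [mem_Icc] at hk; omega⟩
  have hζ0 : ζ ≠ 0 := hζ.ne_zero hN.out
  refine (mul_eq_zero.mp ?_).resolve_right hζ.neZero'.out
  calc w k * dftOn ζ (Icc c d) v k * N
      = ∑ n ∈ Icc c' d', w n * dftOn ζ (Icc c d) v n * ∑ j ∈ Icc c d, ζ ^ ((n - k) * j) := by
        simp only [hζ.sum_zpow_mul_Icc hcd, dvd_sub_comm]
        exact (Int.sum_mul_ite_dvd_sub_Icc hcd' hk fun n => w n * dftOn ζ (Icc c d) v n).symm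
    _ = ∑ j ∈ Icc c d, ζ ^ (-(k * j)) *
          ∑ m ∈ Icc c d, v m * ∑ n ∈ Icc c' d', w n * ζ ^ (n * (j - m)) := by
        simp only [dftOn, mul_sum, sum_mul]
        rw [sum_comm]
        refine sum_congr rfl fun j _ => ?_
        rw [sum_comm]
        refine sum_congr rfl fun m _ => sum_congr rfl fun n _ => ?_
        have hexp : ζ ^ (-(n * m)) * ζ ^ ((n - k) * j) = ζ ^ (-(k * j)) * ζ ^ (n * (j - m)) := by
          rw [← zpow_add₀ hζ0, ← zpow_add₀ hζ0]
          ring_nf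
        linear_combination (w n * v m) * hexp
    _ = 0 := sum_eq_zero fun j _ => by rw [hconv j, mul_zero]

theorem IsPrimitiveRoot.eq_of_convolution_eq_zero (hζ : IsPrimitiveRoot ζ N)
    (hcd : d + 1 = c + N) (hcd' : d' + 1 = c' + N) (h0 : (0 : ℤ) ∈ Icc c' d') {v w : ℤ → K}
    (hw : ∀ k ∈ Icc c' d', k ≠ 0 → w k ≠ 0)
    (hconv : ∀ j, ∑ m ∈ Icc c d, v m * ∑ n ∈ Icc c' d', w n * ζ ^ (n * (j - m)) = 0)
    {m n : ℤ} (hm : m ∈ Icc c d) (hn : n ∈ Icc c d) : v m = v n := by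
  have : NeZero N := ⟨by rw [mem_Icc] at hm; omega⟩
  have hdft : ∀ k ∈ Icc c' d', k ≠ 0 → dftOn ζ (Icc c d) v k = 0 := fun k hk hk0 =>
    (mul_eq_zero.mp (hζ.mul_dftOn_eq_zero_of_convolution_eq_zero hcd hcd' hconv hk)).resolve_left
      (hw k hk hk0)
  have hconst : ∀ m ∈ Icc c d, v m * N = dftOn ζ (Icc c d) v 0 := fun m hm => by
    rw [← hζ.sum_zpow_mul_dftOn hcd hcd' v hm,
      sum_eq_single 0 (fun k hk hk0 => by rw [hdft k hk hk0, mul_zero]) (absurd h0)]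
    simp
  exact mul_right_cancel₀ hζ.neZero'.out ((hconst m hm).trans (hconst n hn).symm)

end DiscreteFourier

theorem deriv_eq_zero_of_eventuallyEq_nhdsNE_of_ne {𝕜 F : Type*} [NontriviallyNormedField 𝕜]
    [NormedAddCommGroup F] [NormedSpace 𝕜 F] {f g : 𝕜 → F} {x : 𝕜} (hfg : f =ᶠ[𝓝[≠] x] g)
    (hg : ContinuousAt g x) (hx : f x ≠ g x) : deriv f x = 0 := by
  refine deriv_zero_of_not_differentiableAt fun hf => hx ?_
  refine tendsto_nhds_unique (f := f) (l := 𝓝[≠] x) ?_ ?_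
  · exact hf.continuousAt.tendsto.mono_left nhdsWithin_le_nhds
  · exact (hg.tendsto.mono_left nhdsWithin_le_nhds).congr' hfg.symm

namespace Real

theorem eventually_sin_half_ne_zero (θ : ℝ) : ∀ᶠ y in 𝓝[≠] θ, sin (y / 2) ≠ 0 := by
  have han : AnalyticOnNhd ℝ (fun y => sin (y / 2)) Set.univ := fun y _ => by fun_prop
  refine (han θ trivial).eventually_eq_zero_or_eventually_ne_zero.resolve_left fun h => ?_
  have := han.eqOn_zero_of_preconnected_of_eventuallyEq_zero isPreconnected_univ (Set.mem_univ θ) h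
    (Set.mem_univ π)
  simp at this

theorem sin_half_mul_sum_cos (Q : ℕ) (θ : ℝ) :
    sin (θ / 2) * ∑ n ∈ Icc (-(Q : ℤ)) Q, cos (n * θ) = sin ((Q + 1 / 2) * θ) := by
  let g : ℕ → ℝ := fun i => sin ((i - Q - 1 / 2) * θ)
  rw [Int.Icc_eq_image_range (show (Q : ℤ) + 1 = -Q + ↑(2 * Q + 1) by push_cast; ring),
    sum_image (fun i _ j _ h => by simpa using h), mul_sum]
  calc ∑ i ∈ range (2 * Q + 1), sin (θ / 2) * cos (((-(Q : ℤ) + i : ℤ) : ℝ) * θ)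
      = ∑ i ∈ range (2 * Q + 1), (g (i + 1) - g i) / 2 := sum_congr rfl fun i _ => by
        simp only [g, sin_sub_sin]
        push_cast
        ring_nf
    _ = sin ((Q + 1 / 2) * θ) := by
        rw [← sum_div, sum_range_sub]
        simp only [g]
        push_cast
        rw [show ((0 : ℝ) - Q - 1 / 2) * θ = -((Q + 1 / 2) * θ) by ring, sin_neg]
        ring_nf

theorem sum_mul_cos_eq_zero (Q : ℕ) (θ : ℝ) : ∑ n ∈ Icc (-(Q : ℤ)) Q, n * cos (n * θ) = 0 := by
  have hneg : ∑ n ∈ Icc (-(Q : ℤ)) Q, n * cos (n * θ)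
      = ∑ n ∈ Icc (-(Q : ℤ)) Q, -(n * cos (n * θ)) :=
    sum_nbij' (fun n => -n) (fun n => -n) (fun n hn => by simp only [mem_Icc] at hn ⊢; omega)
      (fun n hn => by simp only [mem_Icc] at hn ⊢; omega) (fun n _ => neg_neg n)
      (fun n _ => neg_neg n) (fun n _ => by push_cast; simp only [neg_mul, cos_neg, neg_neg])
  rw [sum_neg_distrib] at hneg
  linarith

end Real

noncomputable def dirichletKernel (Q : ℕ) (θ : ℝ) : ℝ :=
  sin ((Q + 1 / 2) * θ) / ((2 * Q + 1) * sin (θ / 2))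

theorem dirichletKernel_eq_sum_cos {Q : ℕ} {θ : ℝ} (hθ : sin (θ / 2) ≠ 0) :
    dirichletKernel Q θ = (∑ n ∈ Icc (-(Q : ℤ)) Q, cos (n * θ)) / (2 * Q + 1) := by
  rw [dirichletKernel, ← sin_half_mul_sum_cos, mul_comm (2 * (Q : ℝ) + 1),
    mul_div_mul_left _ _ hθ]

theorem hasDerivAt_sum_cos_div (Q : ℕ) (θ : ℝ) :
    HasDerivAt (fun θ => (∑ n ∈ Icc (-(Q : ℤ)) Q, cos (n * θ)) / (2 * Q + 1))
      (-(∑ n ∈ Icc (-(Q : ℤ)) Q, n * sin (n * θ)) / (2 * Q + 1)) θ := by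
  have hcos : ∀ n ∈ Icc (-(Q : ℤ)) Q,
      HasDerivAt (fun θ : ℝ => cos (n * θ)) (-(n * sin (n * θ))) θ := fun n _ => by
    simpa [mul_comm] using ((hasDerivAt_id θ).const_mul (n : ℝ)).cos
  simpa only [sum_neg_distrib] using (HasDerivAt.fun_sum hcos).div_const (2 * Q + 1 : ℝ)

theorem deriv_dirichletKernel (Q : ℕ) (θ : ℝ) :
    deriv (dirichletKernel Q) θ = -(∑ n ∈ Icc (-(Q : ℤ)) Q, n * sin (n * θ)) / (2 * Q + 1) := by
  have hpoly := hasDerivAt_sum_cos_div Q θ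
  by_cases hθ : sin (θ / 2) = 0
  · -- `dirichletKernel Q θ = 0` by division by zero, while the kernel tends to `1` at `θ`.
    obtain ⟨t, ht⟩ := sin_eq_zero_iff.mp hθ
    have hcos : ∀ n : ℤ, cos (n * θ) = 1 := fun n => by
      rw [show (n : ℝ) * θ = (n * t : ℤ) * (2 * π) by push_cast; linear_combination (-2 * n) * ht]
      exact cos_int_mul_two_pi _
    have hsin : ∀ n : ℤ, sin (n * θ) = 0 := fun n => by
      rw [show (n : ℝ) * θ = (2 * n * t : ℤ) * π by push_cast; linear_combination (-2 * n) * ht]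
      exact sin_int_mul_pi _
    rw [deriv_eq_zero_of_eventuallyEq_nhdsNE_of_ne ?_ hpoly.continuousAt]
    · simp [hsin]
    · simp only [dirichletKernel, hθ, mul_zero, div_zero, hcos, sum_const, Int.card_Icc]
      rw [show ((Q : ℤ) + 1 - -Q).toNat = 2 * Q + 1 by omega, nsmul_one]
      push_cast
      rw [div_self (by positivity)]
      exact zero_ne_one
    · filter_upwards [eventually_sin_half_ne_zero θ] with y hy using dirichletKernel_eq_sum_cos hy
  · have hev : dirichletKernel Q =ᶠ[𝓝 θ]
        fun θ => (∑ n ∈ Icc (-(Q : ℤ)) Q, cos (n * θ)) / (2 * Q + 1) := by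
      have hcont : Continuous fun y => sin (y / 2) := by fun_prop
      filter_upwards [hcont.continuousAt.eventually_ne hθ] with y hy
        using dirichletKernel_eq_sum_cos hy
    rw [hev.deriv_eq, hpoly.deriv]

open Complex in
theorem ofReal_sum_mul_sin (Q : ℕ) (θ : ℝ) :
    ((∑ n ∈ Icc (-(Q : ℤ)) Q, n * Real.sin (n * θ) : ℝ) : ℂ)
      = -I * ∑ n ∈ Icc (-(Q : ℤ)) Q, n * exp (n * θ * I) := by
  have hcos : ∑ n ∈ Icc (-(Q : ℤ)) Q, (n : ℂ) * Complex.cos (n * θ) = 0 := by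
    exact_mod_cast congrArg ((↑) : ℝ → ℂ) (sum_mul_cos_eq_zero Q θ)
  simp only [exp_mul_I, mul_add, sum_add_distrib, hcos, ← mul_assoc, ← sum_mul]
  push_cast
  rw [mul_zero, zero_add, mul_comm, ← mul_assoc, mul_neg, I_mul_I, neg_neg, one_mul]

open Complex in
theorem deriv_dirichletKernel_comp_mul_grid {Q N : ℕ} (hN : N = 2 * Q + 1) {a : ℝ} (ha : a ≠ 0)
    (r : ℤ) :
    ((deriv (fun x => dirichletKernel Q (2 * π / a * x)) (r * (a / N)) : ℝ) : ℂ) =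
      2 * π * I / (a * N) * ∑ n ∈ Icc (-(Q : ℤ)) Q, n * exp (2 * π * I / N) ^ (n * r) := by
  have hθ : 2 * π / a * (r * (a / N)) = 2 * π * r / N := by field_simp
  have hsum := ofReal_sum_mul_sin Q (2 * π * r / N)
  have hexp : ∀ n : ℤ, exp (n * ((2 * π * r / N : ℝ) : ℂ) * I) = exp (2 * π * I / N) ^ (n * r) :=
    fun n => by
      rw [← exp_int_mul]
      push_cast
      ring_nf
  simp only [hexp] at hsum
  rw [deriv_comp_mul_left, smul_eq_mul, deriv_dirichletKernel, hθ]
  subst hN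
  push_cast at hsum ⊢
  rw [hsum]
  field_simp

/-- For odd `N = 2Q+1`, if `v` satisfies `∑_{m=1}^{N} v_m S'((j−m)h) = 0` for all `j`,
where `S(x) = sin((Q+1/2)·2πx/a)/(N sin(πx/a))` and `h = a/N`, then `v` is constant. -/
theorem kernel_of_differentiation_matrix_is_constant
    (Q : ℕ) (a : ℝ) (ha : 0 < a) (N : ℕ) (hN : N = 2 * Q + 1)
    (h : ℝ) (hh : h = a / N)
    (S : ℝ → ℝ)
    (hS : ∀ x : ℝ, S x =
      Real.sin (((Q : ℝ) + 1/2) * (2 * π * x / a)) / ((N : ℝ) * Real.sin (π * x / a)))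
    (v : ℤ → ℂ)
    (hv : ∀ j : ℤ, ∑ m ∈ Finset.Icc (1 : ℤ) (N : ℤ),
      v m * ((deriv S (((j : ℝ) - (m : ℝ)) * h) : ℝ) : ℂ) = 0) :
    ∃ C : ℂ, ∀ ℓ ∈ Finset.Icc (1 : ℤ) (N : ℤ), v ℓ = C := by
  have hζ := Complex.isPrimitiveRoot_exp N (by omega)
  have hSD : S = fun x => dirichletKernel Q (2 * π / a * x) := by
    funext x
    rw [hS, dirichletKernel, hN]
    push_cast
    ring_nf
  have hconv : ∀ j : ℤ, ∑ m ∈ Icc (1 : ℤ) N, v m * ∑ n ∈ Icc (-(Q : ℤ)) Q,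
      (n : ℂ) * Complex.exp (2 * π * Complex.I / N) ^ (n * (j - m)) = 0 := by
    intro j
    have hj := hv j
    simp_rw [hSD, hh, ← Int.cast_sub, deriv_dirichletKernel_comp_mul_grid hN ha.ne',
      mul_left_comm (v _), ← mul_sum] at hj
    exact (mul_eq_zero.mp hj).resolve_left
      (div_ne_zero (by simp [pi_ne_zero]) (by simp [ha.ne']; omega))
  have hwindow : (N : ℤ) + 1 = 1 + N := add_comm _ _
  have hfreq : (Q : ℤ) + 1 = -Q + N := by omega
  exact ⟨v 1, fun ℓ hℓ => hζ.eq_of_convolution_eq_zero hwindow hfreq (by simp)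
    (fun k _ hk => by exact_mod_cast hk) hconv hℓ (by simp; omega)⟩
end

section
/- For odd N, the differentiation matrix T with T_{ij} = S'((i−j)h) is diagonalized by the discrete Fourier basis: for each k with |k| ≤ Q, the vector w_ℓ = e^{2πikℓ/N} satisfies T w = (2πik/a)·w. In particular, the eigenvalues of T are {2πik/a : k = −Q,…,Q}. -/
open Real

open Finset Complex

/-!
With `ω = e^{2πi/N}`, the entries have the Fourier expansion
`S'(j h) = (2πi / (a N)) ∑_{|κ| ≤ Q} κ ω^{κ j}`: for `ζ = ω^j ≠ 1` one has
`∑_{|κ| ≤ Q} κ ζ^κ = N ζ^{-Q} / (ζ - 1) = N (-1)^j / (2i sin(π j / N))`,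
and both sides vanish when `N ∣ j`. Hence `T` is the circulant matrix with symbol
`κ ↦ 2πiκ/a`, and orthogonality of the characters `ℓ ↦ ω^{κ ℓ}`, `|κ| ≤ Q`,
shows that each of them is an eigenvector.
-/

section FieldSums

theorem sub_one_mul_sum_range_natCast_mul_pow {R : Type*} [CommRing R] (z : R) (n : ℕ) :
    (z - 1) * ∑ t ∈ range n, (t : R) * z ^ t
      = ((n : R) - 1) * z ^ n + 1 - ∑ t ∈ range n, z ^ t := by
  induction n with
  | zero => simp
  | succ n ih =>
    rw [sum_range_succ, sum_range_succ]
    push_cast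
    linear_combination ih

theorem zpow_pow_eq_one_of_pow_eq_one {M : Type*} [DivisionMonoid M] {z : M} {N : ℕ}
    (h : z ^ N = 1) (d : ℤ) : (z ^ d) ^ N = 1 := by
  rw [← zpow_natCast, ← zpow_mul, mul_comm, zpow_mul, zpow_natCast, h, one_zpow]

variable {K : Type*} [Field K]

theorem sum_range_pow_eq_zero_of_pow_eq_one {z : K} (hz : z ≠ 1) {n : ℕ} (h : z ^ n = 1) :
    ∑ t ∈ range n, z ^ t = 0 := by
  rw [geom_sum_eq hz, h, sub_self, zero_div]

theorem sum_range_natCast_mul_pow_of_pow_eq_one {z : K} (hz : z ≠ 1) {n : ℕ} (h : z ^ n = 1) :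
    ∑ t ∈ range n, (t : K) * z ^ t = n / (z - 1) := by
  have key := sub_one_mul_sum_range_natCast_mul_pow z n
  rw [h, sum_range_pow_eq_zero_of_pow_eq_one hz h] at key
  rw [eq_div_iff (sub_ne_zero.mpr hz)]
  linear_combination key

theorem sum_Icc_intCast_eq_zero {R : Type*} [AddCommGroupWithOne R] (Q : ℤ) :
    ∑ κ ∈ Icc (-Q) Q, (κ : R) = 0 :=
  sum_involution (fun κ _ => -κ) (fun κ _ => by push_cast; exact add_neg_cancel _)
    (fun κ _ hκ => by contrapose! hκ; simp [show κ = 0 by omega])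
    (fun κ hκ => by simp only [mem_Icc] at hκ ⊢; omega) (fun κ _ => neg_neg κ)

theorem sum_Icc_intCast_mul_zpow_of_pow_eq_one {z : K} (hz : z ≠ 1) (Q : ℕ)
    (h : z ^ (2 * Q + 1) = 1) :
    ∑ κ ∈ Icc (-(Q : ℤ)) Q, (κ : K) * z ^ κ
      = (2 * Q + 1) * z ^ (-(Q : ℤ)) / (z - 1) := by
  have hz0 : z ≠ 0 := by rintro rfl; simp at h
  have hcard : ((Q : ℤ) + 1 - -(Q : ℤ)).toNat = 2 * Q + 1 := by omega
  rw [Int.Icc_eq_finset_map, sum_map, hcard]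
  simp only [Function.Embedding.trans_apply, Nat.castEmbedding_apply, addLeftEmbedding_apply,
    zpow_add₀ hz0, zpow_natCast]
  push_cast
  simp only [add_mul, mul_assoc, sum_add_distrib, ← mul_sum, mul_left_comm _ (z ^ (-(Q : ℤ))),
    sum_range_natCast_mul_pow_of_pow_eq_one hz h, sum_range_pow_eq_zero_of_pow_eq_one hz h]
  push_cast
  ring

theorem IsPrimitiveRoot.sum_range_zpow_pow_eq_zero {z : K} {N : ℕ}
    (hz : IsPrimitiveRoot z N) {d : ℤ} (hd : ¬ (N : ℤ) ∣ d) :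
    ∑ j ∈ range N, (z ^ d) ^ j = 0 :=
  sum_range_pow_eq_zero_of_pow_eq_one (mt (hz.zpow_eq_one_iff_dvd d).mp hd)
    (zpow_pow_eq_one_of_pow_eq_one hz.pow_eq_one d)

theorem IsPrimitiveRoot.sum_fin_sum_Icc_intCast_mul_zpow_sub {z : K} {N Q : ℕ}
    (hz : IsPrimitiveRoot z N) (hQN : 2 * Q < N) {k : ℤ} (hk : |k| ≤ Q) (i : ℤ) :
    ∑ j : Fin N, (∑ κ ∈ Icc (-(Q : ℤ)) Q, (κ : K) * z ^ (κ * (i - j))) * z ^ (k * j)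
      = N * k * z ^ (k * i) := by
  have hz0 : z ≠ 0 := hz.ne_zero (by omega)
  have hterm : ∀ (j : ℕ) (κ : ℤ),
      (κ : K) * z ^ (κ * (i - j)) * z ^ (k * j) = κ * z ^ (κ * i) * (z ^ (k - κ)) ^ j := by
    intro j κ
    rw [← zpow_natCast, ← zpow_mul, mul_assoc, mul_assoc, ← zpow_add₀ hz0, ← zpow_add₀ hz0]
    ring_nf
  have horth : ∀ κ ∈ Icc (-(Q : ℤ)) Q,
      ∑ j ∈ range N, (z ^ (k - κ)) ^ j = if κ = k then (N : K) else 0 := by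
    intro κ hκ
    split_ifs with hκk
    · simp [hκk]
    · refine hz.sum_range_zpow_pow_eq_zero fun hdvd => hκk ?_
      rw [mem_Icc] at hκ
      rw [abs_le] at hk
      have := Int.eq_zero_of_abs_lt_dvd hdvd (by rw [abs_lt]; omega)
      omega
  calc _ = ∑ κ ∈ Icc (-(Q : ℤ)) Q, κ * z ^ (κ * i) * ∑ j ∈ range N, (z ^ (k - κ)) ^ j := by
        simp_rw [sum_mul, mul_sum, ← hterm]
        rw [sum_comm]
        exact sum_congr rfl fun κ _ =>
          Fin.sum_univ_eq_sum_range (fun j => (κ : K) * z ^ (κ * (i - j)) * z ^ (k * j)) N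
    _ = N * k * z ^ (k * i) := by
        rw [sum_congr rfl fun κ hκ => by rw [horth κ hκ]]
        simp only [mul_ite, mul_zero]
        rw [sum_ite_eq', if_pos (mem_Icc.mpr (abs_le.mp hk))]
        ring

end FieldSums

theorem Complex.exp_two_mul_mul_I_sub_one (x : ℂ) :
    exp (2 * x * I) - 1 = 2 * I * sin x * exp (x * I) := by
  have hsq : exp (2 * x * I) = exp (x * I) * exp (x * I) := by rw [← exp_add]; ring_nf
  have hinv : exp (-x * I) * exp (x * I) = 1 := by rw [← exp_add]; simp
  rw [mul_right_comm 2 I, two_sin]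
  linear_combination hsq + hinv - (exp (-x * I) * exp (x * I) - exp (x * I) ^ 2) * I_sq

theorem Complex.exp_two_mul_mul_I_sub_one_mul_neg_one_zpow {x : ℂ} {m : ℤ} {Q : ℕ}
    (hx : (2 * Q + 1) * x = m * π) :
    (exp (2 * x * I) - 1) * (-1) ^ m = 2 * I * sin x * exp (2 * x * I) ^ (-(Q : ℤ)) := by
  rw [exp_two_mul_mul_I_sub_one, ← exp_pi_mul_I, ← exp_int_mul, ← exp_int_mul, mul_assoc,
    ← exp_add]
  congr 1
  calc exp (x * I + m * (π * I))
      _ = exp ((-(Q : ℤ) : ℤ) * (2 * x * I) + m * (2 * π * I)) := by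
        congr 1; push_cast; linear_combination I * hx
      _ = _ := by rw [exp_add, exp_int_mul_two_pi_mul_I, mul_one]

theorem mul_sum_Icc_intCast_mul_exp_zpow {N Q : ℕ} (hN : N = 2 * Q + 1) {m : ℤ}
    (hm : ¬ (N : ℤ) ∣ m) :
    2 * π * I / N * ∑ κ ∈ Icc (-(Q : ℤ)) Q, (κ : ℂ) * (exp (2 * π * I / N) ^ m) ^ κ
      = π * (-1) ^ m / Complex.sin (m * π / N) := by
  have hz := isPrimitiveRoot_exp N (by omega)
  set z := exp (2 * π * I / N)
  have hζ : z ^ m ≠ 1 := mt (hz.zpow_eq_one_iff_dvd m).mp hm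
  have hζN : (z ^ m) ^ (2 * Q + 1) = 1 := hN ▸ zpow_pow_eq_one_of_pow_eq_one hz.pow_eq_one m
  set x : ℂ := m * π / N with hx
  have hzx : z ^ m = exp (2 * x * I) := by
    rw [← exp_int_mul]; congr 1; ring
  have hN0 : (N : ℂ) ≠ 0 := Nat.cast_ne_zero.mpr (by omega)
  have hNC : (N : ℂ) = 2 * Q + 1 := by rw [hN]; push_cast; ring
  have hxm : (2 * Q + 1) * x = m * π := by
    rw [← hNC, hx]; field_simp
  have key := exp_two_mul_mul_I_sub_one_mul_neg_one_zpow hxm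
  rw [← hzx] at key
  have hsin : sin x ≠ 0 := by
    intro h
    simp only [h, mul_zero, zero_mul, mul_eq_zero, sub_eq_zero] at key
    exact key.elim hζ (zpow_ne_zero _ (by norm_num))
  rw [sum_Icc_intCast_mul_zpow_of_pow_eq_one hζ Q hζN, ← hNC]
  field_simp [sub_ne_zero.mpr hζ]
  linear_combination -key

/-- The entry `S'(j h)` of the differentiation matrix, `h = a / N`. -/
noncomputable def spectralDiffCoeff (a : ℝ) (N : ℕ) (j : ℤ) : ℝ :=
  if (j : ZMod N) = 0 then 0 else (π / a) * (-1 : ℝ) ^ j / Real.sin ((j : ℝ) * π / N)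

theorem ofReal_spectralDiffCoeff_eq_sum {N Q : ℕ} (hN : N = 2 * Q + 1) (a : ℝ) (m : ℤ) :
    (spectralDiffCoeff a N m : ℂ)
      = 2 * π * I / (a * N) *
          ∑ κ ∈ Icc (-(Q : ℤ)) Q, (κ : ℂ) * exp (2 * π * I / N) ^ (κ * m) := by
  have hz := isPrimitiveRoot_exp N (by omega)
  simp_rw [mul_comm _ m, zpow_mul]
  rw [spectralDiffCoeff]
  split_ifs with hm <;> rw [ZMod.intCast_zmod_eq_zero_iff_dvd] at hm
  · simp [(hz.zpow_eq_one_iff_dvd m).mpr hm, sum_Icc_intCast_eq_zero]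
  · push_cast
    linear_combination (a : ℂ)⁻¹ * (mul_sum_Icc_intCast_mul_exp_zpow hN hm).symm

theorem differentiation_matrix_diagonalized_by_fourier_general
    (Q : ℕ) (a : ℝ) (N : ℕ) (hN : N = 2 * Q + 1)
    (Sd : ℤ → ℝ)
    (hSd : ∀ j : ℤ, Sd j =
      if (j : ZMod N) = 0 then 0 else (π / a) * (-1 : ℝ) ^ j / Real.sin ((j : ℝ) * π / N))
    (T : Matrix (Fin N) (Fin N) ℝ)
    (hT : ∀ i j : Fin N, T i j = Sd ((i : ℤ) - (j : ℤ)))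
    (k : ℤ) (hk : |k| ≤ (Q : ℤ))
    (w : Fin N → ℂ)
    (hw : ∀ ℓ : Fin N, w ℓ = Complex.exp (2 * (π : ℂ) * Complex.I * (k : ℂ) * (ℓ : ℂ) / (N : ℂ))) :
    (T.map (fun x : ℝ => (x : ℂ))).mulVec w = (2 * (π : ℂ) * Complex.I * (k : ℂ) / (a : ℂ)) • w := by
  obtain rfl : Sd = spectralDiffCoeff a N := funext hSd
  have hz := isPrimitiveRoot_exp N (by omega)
  set z := exp (2 * π * I / N)
  have hwz : ∀ ℓ : Fin N, w ℓ = z ^ (k * ℓ) := fun ℓ => by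
    rw [hw, ← exp_int_mul]; congr 1; push_cast; ring
  have hN0 : (N : ℂ) ≠ 0 := Nat.cast_ne_zero.mpr (by omega)
  ext i
  simp only [Matrix.mulVec, dotProduct, Matrix.map_apply, hT, ofReal_spectralDiffCoeff_eq_sum hN,
    hwz, Pi.smul_apply, smul_eq_mul]
  simp_rw [mul_assoc (2 * π * I / (a * N) : ℂ), ← mul_sum]
  rw [hz.sum_fin_sum_Icc_intCast_mul_zpow_sub (by omega) hk]
  field_simp

/-- For odd `N = 2Q+1`, the spectral differentiation matrix is diagonalized by the discrete
Fourier basis: for `|k| ≤ Q`, the vector `w_ℓ = e^{2πikℓ/N}` satisfies `T w = (2πik/a) w`. -/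
theorem differentiation_matrix_diagonalized_by_fourier
    (Q : ℕ) (a : ℝ) (ha : 0 < a) (N : ℕ) (hN : N = 2 * Q + 1)
    (Sd : ℤ → ℝ)
    (hSd : ∀ j : ℤ, Sd j =
      if (j : ZMod N) = 0 then 0 else (π / a) * (-1 : ℝ) ^ j / Real.sin ((j : ℝ) * π / N))
    (T : Matrix (Fin N) (Fin N) ℝ)
    (hT : ∀ i j : Fin N, T i j = Sd ((i : ℤ) - (j : ℤ)))
    (k : ℤ) (hk : |k| ≤ (Q : ℤ))
    (w : Fin N → ℂ)
    (hw : ∀ ℓ : Fin N, w ℓ = Complex.exp (2 * (π : ℂ) * Complex.I * (k : ℂ) * (ℓ : ℂ) / (N : ℂ))) :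
    (T.map (fun x : ℝ => (x : ℂ))).mulVec w = (2 * (π : ℂ) * Complex.I * (k : ℂ) / (a : ℂ)) • w :=
  differentiation_matrix_diagonalized_by_fourier_general Q a N hN Sd hSd T hT k hk w hw
end
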